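/- Let {G^A_i} and {G^B_j} be orthogonal operator bases on ℂ^d (Tr(G† G') = d·δ, G_0 = I, G_i Hermitian traceless for i ≥ 1), C = [c_{ij}] a real (d²−1)×(d²−1) matrix, and S = ∑_{i,j=1}^{d^2-1} c_{ij} G^A_i ⊗ G^B_j. Define W₊ = (d−1)‖C‖·I + S and W₋ = (d−1)‖C‖·I − S, where I is the identity on ℂ^d ⊗ ℂ^d and ‖C‖ is the operator norm of C. Then Tr(W₊ σ) ≥ 0 and Tr(W₋ σ) ≥ 0 for every separable state σ on ℂ^d ⊗ ℂ^d. -/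

import Mathlib

open Matrix
open Kronecker
open scoped BigOperators ComplexOrder

/-!
For a product state `ρA ⊗ ρB` the expectation of `S` factorises as `⟪a, C b⟫`, where
`a i = Tr(G^A_i ρA)` and `b j = Tr(G^B_j ρB)` are the (real) Bloch vectors. Bessel's inequality
for the orthogonal family `{G_k / √d}` in the Hilbert–Schmidt inner product, together with
`Tr ρ² ≤ (Tr ρ)² = 1`, gives `1 + ‖a‖² ≤ d`, the `k = 0` term contributing `|Tr ρ|² = 1`.
Hence `|⟪a, C b⟫| ≤ ‖C‖ ‖a‖ ‖b‖ ≤ (d - 1) ‖C‖`, so `W₊` and `W₋` are nonnegative on product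
states, and by linearity on their convex combinations.
-/

/-- The operator norm (largest singular value) of a real square matrix,
realized as the norm of the induced continuous linear map on Euclidean space. -/
noncomputable def opNorm {n : ℕ} (C : Matrix (Fin n) (Fin n) ℝ) : ℝ :=
  ‖(Matrix.toEuclideanCLM (𝕜 := ℝ) C :
      EuclideanSpace ℝ (Fin n) →L[ℝ] EuclideanSpace ℝ (Fin n))‖

/-- A density matrix: Hermitian, positive semidefinite, trace one. -/
def IsDensityMatrix {n : Type*} [Fintype n] (ρ : Matrix n n ℂ) : Prop :=
  ρ.IsHermitian ∧ ρ.PosSemidef ∧ ρ.trace = 1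

/-- A separable state on `ℂ^d ⊗ ℂ^d`: a finite convex combination of Kronecker
products of density matrices. -/
def IsSeparableState {d : ℕ} (σ : Matrix (Fin d × Fin d) (Fin d × Fin d) ℂ) : Prop :=
  ∃ (m : ℕ) (p : Fin m → ℝ) (ρA ρB : Fin m → Matrix (Fin d) (Fin d) ℂ),
    (∀ k, 0 ≤ p k) ∧ (∑ k, p k = 1) ∧
    (∀ k, IsDensityMatrix (ρA k)) ∧ (∀ k, IsDensityMatrix (ρB k)) ∧
    σ = ∑ k, (p k : ℂ) • (ρA k ⊗ₖ ρB k)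

namespace Matrix

variable {ι κ 𝕜 : Type*} [Fintype ι] [RCLike 𝕜]

theorem PosSemidef.re_trace_mul_self_le_sq {A : Matrix ι ι 𝕜} (hA : A.PosSemidef) :
    RCLike.re (A * A).trace ≤ (RCLike.re A.trace) ^ 2 := by
  classical
  have hsq : (A * A).trace = ∑ i, ((hA.1.eigenvalues i ^ 2 : ℝ) : 𝕜) := by
    conv_lhs => rw [hA.1.spectral_theorem, ← map_mul, Unitary.conjStarAlgAut_apply,
      trace_mul_cycle, Unitary.coe_star_mul_self, one_mul, diagonal_mul_diagonal, trace_diagonal]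
    simp [sq]
  rw [hsq, hA.1.trace_eq_sum_eigenvalues]
  simp only [map_sum, RCLike.ofReal_re]
  exact Finset.sum_sq_le_sq_sum_of_nonneg fun i _ => hA.eigenvalues_nonneg i

theorem IsHermitian.ofReal_re_trace_mul {A B : Matrix ι ι ℂ} (hA : A.IsHermitian)
    (hB : B.IsHermitian) : ((A * B).trace.re : ℂ) = (A * B).trace := by
  rw [← Complex.conj_eq_iff_re]
  change star (A * B).trace = _
  rw [← trace_conjTranspose, conjTranspose_mul, hA.eq, hB.eq, trace_mul_comm]

def hilbertSchmidtVec (A : Matrix ι ι 𝕜) : EuclideanSpace 𝕜 (ι × ι) :=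
  WithLp.toLp 2 fun p => A p.1 p.2

theorem inner_hilbertSchmidtVec (A B : Matrix ι ι 𝕜) :
    inner 𝕜 (hilbertSchmidtVec A) (hilbertSchmidtVec B) = (Aᴴ * B).trace := by
  simp only [hilbertSchmidtVec, PiLp.inner_apply, RCLike.inner_apply', Fintype.sum_prod_type,
    trace, diag_apply, mul_apply, conjTranspose_apply]
  rw [Finset.sum_comm]
  rfl

theorem sum_norm_trace_conjTranspose_mul_sq_le [Fintype κ] [DecidableEq κ]
    {G : κ → Matrix ι ι 𝕜} {d : ℕ} (hd : 0 < d)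
    (hG : ∀ k l, ((G k)ᴴ * G l).trace = if k = l then (d : 𝕜) else 0) (X : Matrix ι ι 𝕜) :
    ∑ k, ‖((G k)ᴴ * X).trace‖ ^ 2 ≤ d * RCLike.re (Xᴴ * X).trace := by
  set c : 𝕜 := (((Real.sqrt d)⁻¹ : ℝ) : 𝕜)
  have hc : ∀ k Y, inner 𝕜 (c • hilbertSchmidtVec (G k)) (hilbertSchmidtVec Y) =
      c * ((G k)ᴴ * Y).trace := by
    intro k Y
    rw [inner_smul_left, inner_hilbertSchmidtVec, RCLike.conj_ofReal]
  have hcc : c * c * d = 1 := by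
    have : (Real.sqrt d)⁻¹ * (Real.sqrt d)⁻¹ * d = 1 := by
      rw [← mul_inv, Real.mul_self_sqrt d.cast_nonneg, inv_mul_cancel₀ (by positivity)]
    simp only [c]
    exact_mod_cast this
  have hortho : Orthonormal 𝕜 fun k => c • hilbertSchmidtVec (G k) := by
    rw [orthonormal_iff_ite]
    intro k l
    rw [inner_smul_right, hc, hG, ← mul_assoc]
    split_ifs <;> simp [hcc]
  have hbessel := hortho.sum_inner_products_le (s := Finset.univ) (hilbertSchmidtVec X)
  rw [← inner_self_eq_norm_sq (𝕜 := 𝕜), inner_hilbertSchmidtVec] at hbessel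
  simp only [hc, norm_mul, mul_pow, c, RCLike.norm_ofReal, abs_inv, ← Finset.mul_sum,
    inv_pow, sq_abs, Real.sq_sqrt d.cast_nonneg] at hbessel
  rwa [inv_mul_le_iff₀ (by positivity)] at hbessel

end Matrix

def blochVector {ι : Type*} [Fintype ι] {n : ℕ} (G : Fin (n + 1) → Matrix ι ι ℂ)
    (ρ : Matrix ι ι ℂ) : EuclideanSpace ℝ (Fin n) :=
  WithLp.toLp 2 fun i => (G i.succ * ρ).trace.re

theorem norm_blochVector_sq_le {ι : Type*} [Fintype ι] [DecidableEq ι] {n d : ℕ}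
    {G : Fin (n + 1) → Matrix ι ι ℂ}
    (hG : ∀ k l, ((G k)ᴴ * G l).trace = if k = l then (d : ℂ) else 0) (hG0 : G 0 = 1)
    (hGherm : ∀ i : Fin n, (G i.succ).IsHermitian) {ρ : Matrix ι ι ℂ} (hρ : IsDensityMatrix ρ) :
    ‖blochVector G ρ‖ ^ 2 ≤ d - 1 := by
  obtain ⟨hherm, hpsd, htr⟩ := hρ
  have hd : 0 < d := by
    have hcard : Fintype.card ι = d := by exact_mod_cast (by simpa [hG0] using hG 0 0)
    have : Nonempty ι := by
      by_contra h
      simp [not_nonempty_iff.mp h, trace] at htr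
    exact hcard ▸ Fintype.card_pos
  have hbessel := sum_norm_trace_conjTranspose_mul_sq_le hd hG ρ
  have hsq := hpsd.re_trace_mul_self_le_sq
  rw [Fin.sum_univ_succ, hG0, conjTranspose_one, Matrix.one_mul, htr, hherm.eq] at hbessel
  rw [htr] at hsq
  have hcoord : ∀ i : Fin n, ‖((G i.succ)ᴴ * ρ).trace‖ = |(G i.succ * ρ).trace.re| := by
    intro i
    rw [(hGherm i).eq, ← Real.norm_eq_abs, ← Complex.norm_real,
      (hGherm i).ofReal_re_trace_mul hherm]
  simp only [hcoord, sq_abs, norm_one, one_pow, RCLike.re_to_complex, Complex.one_re]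
    at hbessel hsq
  rw [EuclideanSpace.norm_sq_eq]
  simp only [blochVector, PiLp.toLp_apply, Real.norm_eq_abs, sq_abs]
  have := mul_le_mul_of_nonneg_left hsq (Nat.cast_nonneg (α := ℝ) d)
  linarith

section Correlation

variable {ι κ : Type*} [Fintype ι] [Fintype κ] {n : ℕ}
  {GA : Fin (n + 1) → Matrix ι ι ℂ} {GB : Fin (n + 1) → Matrix κ κ ℂ}

theorem trace_correlation_mul_kronecker (hGA : ∀ i : Fin n, (GA i.succ).IsHermitian)
    (hGB : ∀ i : Fin n, (GB i.succ).IsHermitian) (C : Matrix (Fin n) (Fin n) ℝ)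
    {ρA : Matrix ι ι ℂ} {ρB : Matrix κ κ ℂ} (hρA : ρA.IsHermitian) (hρB : ρB.IsHermitian) :
    ((∑ i, ∑ j, (C i j : ℂ) • (GA i.succ ⊗ₖ GB j.succ)) * (ρA ⊗ₖ ρB)).trace =
      (inner ℝ (blochVector GA ρA) (toEuclideanCLM (𝕜 := ℝ) C (blochVector GB ρB)) : ℝ) := by
  rw [PiLp.inner_apply, Finset.sum_mul, trace_sum]
  push_cast
  refine Finset.sum_congr rfl fun i _ => ?_
  rw [Finset.sum_mul, trace_sum, ofLp_toEuclideanCLM]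
  simp only [blochVector, mulVec, dotProduct, RCLike.inner_apply, conj_trivial]
  push_cast
  rw [Finset.sum_mul]
  refine Finset.sum_congr rfl fun j _ => ?_
  rw [smul_mul, trace_smul, ← mul_kronecker_mul, trace_kronecker,
    (hGA i).ofReal_re_trace_mul hρA, (hGB j).ofReal_re_trace_mul hρB, smul_eq_mul]
  ring

theorem trace_correlation_mul_kronecker_mem_Icc [DecidableEq ι] [DecidableEq κ] {d : ℕ}
    (hGA : ∀ k l, ((GA k)ᴴ * GA l).trace = if k = l then (d : ℂ) else 0)
    (hGB : ∀ k l, ((GB k)ᴴ * GB l).trace = if k = l then (d : ℂ) else 0)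
    (hGA0 : GA 0 = 1) (hGB0 : GB 0 = 1)
    (hGAherm : ∀ i : Fin n, (GA i.succ).IsHermitian)
    (hGBherm : ∀ i : Fin n, (GB i.succ).IsHermitian) (C : Matrix (Fin n) (Fin n) ℝ)
    {ρA : Matrix ι ι ℂ} {ρB : Matrix κ κ ℂ} (hρA : IsDensityMatrix ρA)
    (hρB : IsDensityMatrix ρB) :
    ((∑ i, ∑ j, (C i j : ℂ) • (GA i.succ ⊗ₖ GB j.succ)) * (ρA ⊗ₖ ρB)).trace ∈
      Set.Icc (-((((d : ℝ) - 1) * opNorm C : ℝ) : ℂ)) ((((d : ℝ) - 1) * opNorm C : ℝ) : ℂ) := by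
  rw [trace_correlation_mul_kronecker hGAherm hGBherm C hρA.1 hρB.1]
  set a := blochVector GA ρA
  set b := blochVector GB ρB
  have ha := norm_blochVector_sq_le hGA hGA0 hGAherm hρA
  have hb := norm_blochVector_sq_le hGB hGB0 hGBherm hρB
  have hab : ‖a‖ * ‖b‖ ≤ d - 1 := by nlinarith [two_mul_le_add_sq ‖a‖ ‖b‖]
  have hbound : |inner ℝ a (toEuclideanCLM (𝕜 := ℝ) C b)| ≤ ((d : ℝ) - 1) * opNorm C :=
    calc |inner ℝ a (toEuclideanCLM (𝕜 := ℝ) C b)|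
        ≤ ‖a‖ * ‖toEuclideanCLM (𝕜 := ℝ) C b‖ := abs_real_inner_le_norm _ _
      _ ≤ ‖a‖ * (opNorm C * ‖b‖) := by gcongr; exact ContinuousLinearMap.le_opNorm _ _
      _ = opNorm C * (‖a‖ * ‖b‖) := by ring
      _ ≤ opNorm C * (d - 1) := by gcongr; exact norm_nonneg _
      _ = ((d : ℝ) - 1) * opNorm C := mul_comm _ _
  rw [Set.mem_Icc, ← Complex.ofReal_neg, Complex.real_le_real, Complex.real_le_real]
  exact abs_le.mp hbound

end Correlation

theorem IsSeparableState.trace_mul_nonneg {d : ℕ} {W σ : Matrix (Fin d × Fin d) (Fin d × Fin d) ℂ}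
    (hσ : IsSeparableState σ)
    (hW : ∀ ρA ρB, IsDensityMatrix ρA → IsDensityMatrix ρB → 0 ≤ (W * (ρA ⊗ₖ ρB)).trace) :
    0 ≤ (W * σ).trace := by
  obtain ⟨m, p, ρA, ρB, hp, -, hρA, hρB, rfl⟩ := hσ
  rw [Matrix.mul_sum, trace_sum]
  refine Finset.sum_nonneg fun k _ => ?_
  rw [Matrix.mul_smul, trace_smul, smul_eq_mul]
  exact mul_nonneg (Complex.zero_le_real.mpr (hp k)) (hW _ _ (hρA k) (hρB k))

theorem stmt4_general (d n : ℕ)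
    (GA GB : Fin (n + 1) → Matrix (Fin d) (Fin d) ℂ)
    (hGA : ∀ k l, ((GA k)ᴴ * GA l).trace = if k = l then (d : ℂ) else 0)
    (hGB : ∀ k l, ((GB k)ᴴ * GB l).trace = if k = l then (d : ℂ) else 0)
    (hGA0 : GA 0 = 1) (hGB0 : GB 0 = 1)
    (hGAherm : ∀ i : Fin n, (GA i.succ).IsHermitian)
    (hGBherm : ∀ i : Fin n, (GB i.succ).IsHermitian)
    (C : Matrix (Fin n) (Fin n) ℝ)
    (S : Matrix (Fin d × Fin d) (Fin d × Fin d) ℂ)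
    (hS : S = ∑ i : Fin n, ∑ j : Fin n, (C i j : ℂ) • (GA i.succ ⊗ₖ GB j.succ))
    (Wplus Wminus : Matrix (Fin d × Fin d) (Fin d × Fin d) ℂ)
    (hWplus : Wplus = (((d : ℝ) - 1) * opNorm C : ℝ) • (1 : Matrix (Fin d × Fin d) (Fin d × Fin d) ℂ) + S)
    (hWminus : Wminus = (((d : ℝ) - 1) * opNorm C : ℝ) • (1 : Matrix (Fin d × Fin d) (Fin d × Fin d) ℂ) - S)
    (σ : Matrix (Fin d × Fin d) (Fin d × Fin d) ℂ) (hσ : IsSeparableState σ) :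
    (∃ r : ℝ, (Wplus * σ).trace = (r : ℂ) ∧ 0 ≤ r) ∧
    (∃ r : ℝ, (Wminus * σ).trace = (r : ℂ) ∧ 0 ≤ r) := by
  set c : ℝ := ((d : ℝ) - 1) * opNorm C
  have hSbound (ρA ρB) (hρA : IsDensityMatrix ρA) (hρB : IsDensityMatrix ρB) :
      (S * (ρA ⊗ₖ ρB)).trace ∈ Set.Icc (-(c : ℂ)) c :=
    hS ▸ trace_correlation_mul_kronecker_mem_Icc hGA hGB hGA0 hGB0 hGAherm hGBherm C hρA hρB
  have hscalar (ρA ρB) (hρA : IsDensityMatrix ρA) (hρB : IsDensityMatrix ρB) :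
      ((c • 1 : Matrix (Fin d × Fin d) (Fin d × Fin d) ℂ) * (ρA ⊗ₖ ρB)).trace = (c : ℂ) := by
    rw [smul_mul, Matrix.one_mul, trace_smul, trace_kronecker, hρA.2.2, hρB.2.2, mul_one,
      Complex.real_smul, mul_one]
  have hwitness (W : Matrix (Fin d × Fin d) (Fin d × Fin d) ℂ)
      (hW : ∀ ρA ρB, IsDensityMatrix ρA → IsDensityMatrix ρB → 0 ≤ (W * (ρA ⊗ₖ ρB)).trace) :
      ∃ r : ℝ, (W * σ).trace = r ∧ 0 ≤ r := by
    obtain ⟨r, hr, hrW⟩ := RCLike.nonneg_iff_exists_ofReal.mp (hσ.trace_mul_nonneg hW)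
    exact ⟨r, hrW.symm, hr⟩
  subst hWplus hWminus
  refine ⟨hwitness _ fun ρA ρB hρA hρB => ?_, hwitness _ fun ρA ρB hρA hρB => ?_⟩
  · rw [add_mul, trace_add, hscalar ρA ρB hρA hρB]
    exact neg_le_iff_add_nonneg'.mp (hSbound ρA ρB hρA hρB).1
  · rw [sub_mul, trace_sub, hscalar ρA ρB hρA hρB]
    exact sub_nonneg.mpr (hSbound ρA ρB hρA hρB).2

/-- With `S = ∑_{i,j≥1} c_{ij} G^A_i ⊗ G^B_j` as above and
`W₊ = (d−1)‖C‖·I + S`, `W₋ = (d−1)‖C‖·I − S`, both witnesses have nonnegative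
expectation value `Tr(W σ) ≥ 0` on every separable state `σ`. -/
theorem stmt4 (d n : ℕ) (hn : n + 1 = d ^ 2)
    (GA GB : Fin (n + 1) → Matrix (Fin d) (Fin d) ℂ)
    (hGA : ∀ k l, ((GA k)ᴴ * GA l).trace = if k = l then (d : ℂ) else 0)
    (hGB : ∀ k l, ((GB k)ᴴ * GB l).trace = if k = l then (d : ℂ) else 0)
    (hGA0 : GA 0 = 1) (hGB0 : GB 0 = 1)
    (hGAtr : ∀ i : Fin n, (GA i.succ).trace = 0)
    (hGBtr : ∀ i : Fin n, (GB i.succ).trace = 0)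
    (hGAherm : ∀ i : Fin n, (GA i.succ).IsHermitian)
    (hGBherm : ∀ i : Fin n, (GB i.succ).IsHermitian)
    (C : Matrix (Fin n) (Fin n) ℝ)
    (S : Matrix (Fin d × Fin d) (Fin d × Fin d) ℂ)
    (hS : S = ∑ i : Fin n, ∑ j : Fin n, (C i j : ℂ) • (GA i.succ ⊗ₖ GB j.succ))
    (Wplus Wminus : Matrix (Fin d × Fin d) (Fin d × Fin d) ℂ)
    (hWplus : Wplus = (((d : ℝ) - 1) * opNorm C : ℝ) • (1 : Matrix (Fin d × Fin d) (Fin d × Fin d) ℂ) + S)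
    (hWminus : Wminus = (((d : ℝ) - 1) * opNorm C : ℝ) • (1 : Matrix (Fin d × Fin d) (Fin d × Fin d) ℂ) - S)
    (σ : Matrix (Fin d × Fin d) (Fin d × Fin d) ℂ) (hσ : IsSeparableState σ) :
    (∃ r : ℝ, (Wplus * σ).trace = (r : ℂ) ∧ 0 ≤ r) ∧
    (∃ r : ℝ, (Wminus * σ).trace = (r : ℂ) ∧ 0 ≤ r) :=
  stmt4_general d n GA GB hGA hGB hGA0 hGB0 hGAherm hGBherm C S hS Wplus Wminus hWplus hWminus σ hσ
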